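/- arXiv:2601.10280 — 6 statements merged into one kernel-verified Lean document; each statement's English description precedes it below -/
import Mathlib

section
/- For every b > 0 and every real α ≥ (1/(2b)) - (coth b)/2, and every continuously differentiable compactly supported function ψ on [b, ∞), the inequality ∫_b^∞ |ψ'(t)|² sinh(t) dt + α sinh(b) |ψ(b)|² ≥ (1/4) ∫_b^∞ |ψ(t)|² sinh(t) dt holds. -/
open Real MeasureTheory Set Filter Topology

/-!
Ground-state substitution in Riccati form. For a weight `ρ > 0` and any `w` with
`w' + w² / ρ + V ≤ 0`, completing the square gives pointwise
`(w ψ²)' + V ψ² ≤ ρ ψ'²`, and integrating over `(b, ∞)` leaves only the boundary term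
`w(b) ψ(b)²`. For `ρ = sinh`, `V = sinh / 4` the choice `w = sinh t / (2t) - cosh t / 2`
works, since then `w' + w² / sinh + sinh / 4 = (t² - sinh² t) / (4 t² sinh t) ≤ 0`, and
the hypothesis on `α` says exactly `w(b) ≤ α sinh b`.
-/

theorem ContinuousOn.integrableOn_of_hasCompactSupport {X E : Type*} [TopologicalSpace X]
    [MeasurableSpace X] [OpensMeasurableSpace X] [T2Space X] {μ : Measure X}
    [IsFiniteMeasureOnCompacts μ] [NormedAddCommGroup E] {f : X → E} {s : Set X}
    (hf : ContinuousOn f s) (hs : IsClosed s) (hsupp : HasCompactSupport f) :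
    IntegrableOn f s μ :=
  ((hf.mono inter_subset_left).integrableOn_compact
    (hsupp.isCompact.inter_left hs)).of_forall_sdiff_eq_zero hs.measurableSet
    fun _ hx => image_eq_zero_of_notMem_tsupport fun h => hx.2 ⟨hx.1, h⟩

theorem mul_sq_add_le_of_riccati {ρ w w' V p q : ℝ} (hρ : 0 < ρ)
    (hric : w' + w ^ 2 / ρ + V ≤ 0) :
    w' * p ^ 2 + w * (2 * p * q) + p ^ 2 * V ≤ q ^ 2 * ρ := by
  have hsq : 0 ≤ (ρ * q - w * p) ^ 2 / ρ := by positivity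
  have hid : q ^ 2 * ρ - (w' * p ^ 2 + w * (2 * p * q) + p ^ 2 * V)
      = (ρ * q - w * p) ^ 2 / ρ - (w' + w ^ 2 / ρ + V) * p ^ 2 := by
    field_simp
    ring
  nlinarith [mul_nonneg (neg_nonneg.2 hric) (sq_nonneg p)]

/-- `sinh · φ' / φ` for `φ t = √(t / sinh t)`, a positive supersolution of
`-(sinh · φ')' ≥ sinh · φ / 4`. -/
noncomputable def sinhHardyWeight (t : ℝ) : ℝ := sinh t / (2 * t) - cosh t / 2

theorem hasDerivAt_sinhHardyWeight {t : ℝ} (ht : t ≠ 0) :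
    HasDerivAt sinhHardyWeight (cosh t / (2 * t) - sinh t / (2 * t ^ 2) - sinh t / 2) t := by
  have h2t : HasDerivAt (fun x : ℝ => 2 * x) 2 t := by
    simpa using (hasDerivAt_id t).const_mul 2
  refine (((hasDerivAt_sinh t).div h2t (by positivity)).sub
    ((hasDerivAt_cosh t).div_const 2)).congr_deriv ?_
  field_simp

theorem sinhHardyWeight_riccati {t : ℝ} (ht : 0 < t) :
    (cosh t / (2 * t) - sinh t / (2 * t ^ 2) - sinh t / 2) + sinhHardyWeight t ^ 2 / sinh t
      + sinh t / 4 ≤ 0 := by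
  have hs : 0 < sinh t := sinh_pos_iff.2 ht
  have hid : (cosh t / (2 * t) - sinh t / (2 * t ^ 2) - sinh t / 2)
      + sinhHardyWeight t ^ 2 / sinh t + sinh t / 4
      = (t ^ 2 - sinh t ^ 2) / (4 * t ^ 2 * sinh t) := by
    rw [sinhHardyWeight]
    field_simp
    linear_combination (4 * t ^ 2) * cosh_sq' t
  rw [hid]
  apply div_nonpos_of_nonpos_of_nonneg _ (by positivity)
  nlinarith [self_lt_sinh_iff.2 ht]

theorem integral_sq_mul_le_of_riccati {b : ℝ} {ρ V w w' ψ : ℝ → ℝ}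
    (hρc : ContinuousOn ρ (Ici b)) (hVc : ContinuousOn V (Ici b))
    (hw'c : ContinuousOn w' (Ici b)) (hw : ∀ x ∈ Ici b, HasDerivAt w (w' x) x)
    (hρ : ∀ x ∈ Ioi b, 0 < ρ x) (hric : ∀ x ∈ Ioi b, w' x + w x ^ 2 / ρ x + V x ≤ 0)
    (hψ : ContDiff ℝ 1 ψ) (hsupp : HasCompactSupport ψ) :
    ∫ t in Ioi b, ψ t ^ 2 * V t
      ≤ (∫ t in Ioi b, deriv ψ t ^ 2 * ρ t) + w b * ψ b ^ 2 := by
  have hψd : Differentiable ℝ ψ := hψ.differentiable one_ne_zero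
  have hψc : Continuous ψ := hψ.continuous
  have hψ'c : Continuous (deriv ψ) := hψ.continuous_deriv le_rfl
  have hwc : ContinuousOn w (Ici b) := fun x hx => (hw x hx).continuousAt.continuousWithinAt
  have integrable {f g : ℝ → ℝ} (hf : ContinuousOn f (Ici b)) (hg : HasCompactSupport g)
      (hfg : ∀ x, g x = 0 → f x = 0) : IntegrableOn f (Ioi b) :=
    (hf.integrableOn_of_hasCompactSupport isClosed_Ici
      (hg.mono fun x hx hgx => hx (hfg x hgx))).mono_set Ioi_subset_Ici_self
  set F' := fun t => w' t * ψ t ^ 2 + w t * (2 * ψ t * deriv ψ t)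
  have hF'int : IntegrableOn F' (Ioi b) :=
    integrable (by fun_prop) hsupp fun x hx => by simp [F', hx]
  have hVint : IntegrableOn (fun t => ψ t ^ 2 * V t) (Ioi b) :=
    integrable (by fun_prop) hsupp fun x hx => by simp [hx]
  have hρint : IntegrableOn (fun t => deriv ψ t ^ 2 * ρ t) (Ioi b) :=
    integrable (by fun_prop) hsupp.deriv fun x hx => by simp [hx]
  have hF : ∀ x ∈ Ici b, HasDerivAt (fun t => w t * ψ t ^ 2) (F' x) x := fun x hx =>
    ((hw x hx).mul ((hψd x).hasDerivAt.pow 2)).congr_deriv (by simp [F'])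
  have hF_atTop : Tendsto (fun t => w t * ψ t ^ 2) atTop (𝓝 0) := by
    rw [hasCompactSupport_iff_eventuallyEq, coclosedCompact_eq_cocompact] at hsupp
    refine tendsto_const_nhds.congr' ?_
    filter_upwards [hsupp.filter_mono atTop_le_cocompact] with x hx
    simp [hx]
  have hFTC : ∫ t in Ioi b, F' t = 0 - w b * ψ b ^ 2 :=
    integral_Ioi_of_hasDerivAt_of_tendsto' hF hF'int hF_atTop
  calc ∫ t in Ioi b, ψ t ^ 2 * V t
      = (∫ t in Ioi b, (F' t + ψ t ^ 2 * V t)) + w b * ψ b ^ 2 := by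
        rw [integral_add hF'int hVint, hFTC]
        ring
    _ ≤ (∫ t in Ioi b, deriv ψ t ^ 2 * ρ t) + w b * ψ b ^ 2 :=
        (add_le_add_iff_right _).2 <| setIntegral_mono_on (hF'int.add hVint) hρint
          measurableSet_Ioi fun x hx => mul_sq_add_le_of_riccati (hρ x hx) (hric x hx)

/-- Weighted Poincaré-type inequality with boundary term, weight `sinh t`. -/
theorem stmt0 (b : ℝ) (hb : 0 < b) (α : ℝ)
    (hα : 1 / (2 * b) - Real.cosh b / Real.sinh b / 2 ≤ α)
    (ψ : ℝ → ℝ) (hψ : ContDiff ℝ 1 ψ) (hsupp : HasCompactSupport ψ) :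
    (1 / 4) * (∫ t in Ioi b, (ψ t) ^ 2 * Real.sinh t) ≤
      (∫ t in Ioi b, (deriv ψ t) ^ 2 * Real.sinh t) + α * Real.sinh b * (ψ b) ^ 2 := by
  have hpos : ∀ x, b ≤ x → 0 < x := fun x hx => hb.trans_le hx
  have hardy := integral_sq_mul_le_of_riccati (V := fun t => sinh t / 4) (w := sinhHardyWeight)
    continuous_sinh.continuousOn (by fun_prop) (fun x hx => by
      have := (hpos x hx).ne'
      exact ContinuousAt.continuousWithinAt (by fun_prop (disch := positivity)))
    (fun x hx => hasDerivAt_sinhHardyWeight (hpos x hx).ne')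
    (fun x hx => sinh_pos_iff.2 (hpos x hx.le))
    (fun x hx => sinhHardyWeight_riccati (hpos x hx.le)) hψ hsupp
  have hboundary : sinhHardyWeight b ≤ α * sinh b := by
    have hsb : 0 < sinh b := sinh_pos_iff.2 hb
    calc sinhHardyWeight b = (1 / (2 * b) - cosh b / sinh b / 2) * sinh b := by
          rw [sinhHardyWeight]
          field_simp
      _ ≤ α * sinh b := by gcongr
  calc (1 / 4) * (∫ t in Ioi b, ψ t ^ 2 * sinh t)
      = ∫ t in Ioi b, ψ t ^ 2 * (sinh t / 4) := by
        rw [← integral_const_mul]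
        congr 1 with t
        ring
    _ ≤ (∫ t in Ioi b, deriv ψ t ^ 2 * sinh t) + sinhHardyWeight b * ψ b ^ 2 := hardy
    _ ≤ (∫ t in Ioi b, deriv ψ t ^ 2 * sinh t) + α * sinh b * ψ b ^ 2 := by gcongr
end

section
/- For every b > 0, every real α ≥ -1/2, and every continuously differentiable compactly supported function ψ on [b, ∞), the inequality ∫_b^∞ |ψ'(t)|² e^t dt + α e^b |ψ(b)|² ≥ (1/4) ∫_b^∞ |ψ(t)|² e^t dt holds. -/
open Real MeasureTheory Set

/-!
Pointwise, `(2ψ' + ψ)² eᵗ = (4ψ'² - ψ²) eᵗ + 2 (ψ² eᵗ)'`, and `ψ² eᵗ` vanishes at infinity, so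
`0 ≤ ∫_b^∞ (2ψ' + ψ)² eᵗ = 4 ∫_b^∞ ψ'² eᵗ - ∫_b^∞ ψ² eᵗ - 2 ψ(b)² eᵇ`.
This is the inequality for `α = -1/2`; a larger `α` only adds `(α + 1/2) eᵇ ψ(b)² ≥ 0`.
-/

lemma HasCompactSupport.pow {α M : Type*} [TopologicalSpace α] [MonoidWithZero M] {f : α → M}
    (hf : HasCompactSupport f) {n : ℕ} (hn : n ≠ 0) : HasCompactSupport fun x => f x ^ n :=
  hf.comp_left (g := (· ^ n)) (zero_pow hn)

lemma integrableOn_mul_exp {g : ℝ → ℝ} (hg : Continuous g) (hgs : HasCompactSupport g)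
    (s : Set ℝ) : IntegrableOn (fun t => g t * exp t) s :=
  ((hg.mul continuous_exp).integrable_of_hasCompactSupport hgs.mul_right).integrableOn

variable {ψ : ℝ → ℝ}

lemma deriv_sq_mul_exp {t : ℝ} (hψ : DifferentiableAt ℝ ψ t) :
    deriv (fun s => ψ s ^ 2 * exp s) t = (2 * ψ t * deriv ψ t + ψ t ^ 2) * exp t := by
  have h : HasDerivAt (fun s => ψ s ^ 2 * exp s)
      (2 * ψ t ^ 1 * deriv ψ t * exp t + ψ t ^ 2 * exp t) t :=
    (hψ.hasDerivAt.pow 2).mul (hasDerivAt_exp t)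
  rw [h.deriv]
  ring

theorem integral_Ioi_deriv_sq_mul_exp (hψ : ContDiff ℝ 1 ψ) (hsupp : HasCompactSupport ψ)
    (b : ℝ) : ∫ t in Ioi b, (2 * ψ t * deriv ψ t + ψ t ^ 2) * exp t = -(ψ b ^ 2 * exp b) := by
  have hderiv t := deriv_sq_mul_exp (hψ.differentiable one_ne_zero t)
  simp_rw [← hderiv]
  exact HasCompactSupport.integral_Ioi_deriv_eq (f := fun s => ψ s ^ 2 * exp s)
    ((hψ.pow 2).mul contDiff_exp) (hsupp.pow two_ne_zero).mul_right b

theorem one_fourth_integral_sq_mul_exp_le (hψ : ContDiff ℝ 1 ψ) (hsupp : HasCompactSupport ψ)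
    (b : ℝ) :
    (1 / 4) * (∫ t in Ioi b, ψ t ^ 2 * exp t) ≤
      (∫ t in Ioi b, deriv ψ t ^ 2 * exp t) - (1 / 2) * exp b * ψ b ^ 2 := by
  have hc := hψ.continuous
  have hc' := hψ.continuous_deriv le_rfl
  have hint_deriv_sq : IntegrableOn (fun t => deriv ψ t ^ 2 * exp t) (Ioi b) :=
    integrableOn_mul_exp (g := fun t => deriv ψ t ^ 2) (hc'.pow 2)
      (hsupp.deriv.pow two_ne_zero) _
  have hint_sq : IntegrableOn (fun t => ψ t ^ 2 * exp t) (Ioi b) :=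
    integrableOn_mul_exp (g := fun t => ψ t ^ 2) (hc.pow 2) (hsupp.pow two_ne_zero) _
  have hint_cross : IntegrableOn (fun t => (2 * ψ t * deriv ψ t + ψ t ^ 2) * exp t) (Ioi b) :=
    integrableOn_mul_exp (g := fun t => 2 * ψ t * deriv ψ t + ψ t ^ 2) (by fun_prop)
      (hsupp.mono fun t ht => by
        contrapose! ht
        simp [Function.notMem_support.mp ht]) _
  have hexpand : ∫ t in Ioi b, (2 * deriv ψ t + ψ t) ^ 2 * exp t =
      4 * (∫ t in Ioi b, deriv ψ t ^ 2 * exp t) - (∫ t in Ioi b, ψ t ^ 2 * exp t) +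
        2 * ∫ t in Ioi b, (2 * ψ t * deriv ψ t + ψ t ^ 2) * exp t := by
    have hpointwise : (fun t => (2 * deriv ψ t + ψ t) ^ 2 * exp t) = fun t =>
        4 * (deriv ψ t ^ 2 * exp t) - ψ t ^ 2 * exp t +
          2 * ((2 * ψ t * deriv ψ t + ψ t ^ 2) * exp t) := by
      ext t
      ring
    rw [hpointwise, integral_add ((hint_deriv_sq.const_mul 4).sub' hint_sq)
      (hint_cross.const_mul 2), integral_sub (hint_deriv_sq.const_mul 4) hint_sq,
      integral_const_mul, integral_const_mul]
  have hnonneg : 0 ≤ ∫ t in Ioi b, (2 * deriv ψ t + ψ t) ^ 2 * exp t :=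
    setIntegral_nonneg measurableSet_Ioi fun t _ => by positivity
  rw [hexpand, integral_Ioi_deriv_sq_mul_exp hψ hsupp] at hnonneg
  linarith

theorem stmt1_general (b : ℝ) (α : ℝ) (hα : -(1/2 : ℝ) ≤ α)
    (ψ : ℝ → ℝ) (hψ : ContDiff ℝ 1 ψ) (hsupp : HasCompactSupport ψ) :
    (1 / 4) * (∫ t in Ioi b, (ψ t) ^ 2 * Real.exp t) ≤
      (∫ t in Ioi b, (deriv ψ t) ^ 2 * Real.exp t) + α * Real.exp b * (ψ b) ^ 2 := by
  have hboundary : -(1 / 2) * exp b * ψ b ^ 2 ≤ α * exp b * ψ b ^ 2 := by gcongr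
  linarith [one_fourth_integral_sq_mul_exp_le hψ hsupp b]

/-- Weighted Poincaré-type inequality with boundary term, weight `e^t`. -/
theorem stmt1 (b : ℝ) (hb : 0 < b) (α : ℝ) (hα : -(1/2 : ℝ) ≤ α)
    (ψ : ℝ → ℝ) (hψ : ContDiff ℝ 1 ψ) (hsupp : HasCompactSupport ψ) :
    (1 / 4) * (∫ t in Ioi b, (ψ t) ^ 2 * Real.exp t) ≤
      (∫ t in Ioi b, (deriv ψ t) ^ 2 * Real.exp t) + α * Real.exp b * (ψ b) ^ 2 :=
  stmt1_general b α hα ψ hψ hsupp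
end

section
/- For every b ≥ 0, every real α ≥ -(1/2) tanh(b), and every continuously differentiable compactly supported function ψ on [b, ∞), the inequality ∫_b^∞ |ψ'(t)|² cosh(t) dt + α cosh(b) |ψ(b)|² ≥ (1/4) ∫_b^∞ |ψ(t)|² cosh(t) dt holds. -/
/-!
Expanding `0 ≤ (2ψ' cosh + ψ sinh)² + ψ² (cosh² - sinh²)` and dividing by `4 cosh` gives the
pointwise bound `0 ≤ ψ'² cosh + ψψ' sinh + ψ² cosh / 4`. Integrating by parts,
`∫_b^∞ 2ψψ' sinh = -ψ(b)² sinh b - ∫_b^∞ ψ² cosh`, so the integrated bound reads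
`(1/4) ∫ ψ² cosh ≤ ∫ ψ'² cosh - (1/2) sinh b ψ(b)²`, and `-(1/2) sinh b ≤ α cosh b` is the
hypothesis on `α` multiplied by `cosh b`.
-/

open Real MeasureTheory Set

theorem cosh_sinh_quadratic_nonneg (x y t : ℝ) :
    0 ≤ y ^ 2 * cosh t + x * y * sinh t + x ^ 2 * cosh t / 4 := by
  have hsquare : 0 ≤ (2 * y * cosh t + x * sinh t) ^ 2 + x ^ 2 * (cosh t ^ 2 - sinh t ^ 2) := by
    positivity [cosh_sq_sub_sinh_sq t]
  have hexpand : (2 * y * cosh t + x * sinh t) ^ 2 + x ^ 2 * (cosh t ^ 2 - sinh t ^ 2) =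
      4 * cosh t * (y ^ 2 * cosh t + x * y * sinh t + x ^ 2 * cosh t / 4) := by
    ring
  rw [hexpand] at hsquare
  exact nonneg_of_mul_nonneg_right hsquare (by positivity)

theorem neg_half_sinh_le_mul_cosh {b α : ℝ} (hα : -(1 / 2 : ℝ) * tanh b ≤ α) :
    -(1 / 2) * sinh b ≤ α * cosh b := by
  calc -(1 / 2) * sinh b = -(1 / 2) * tanh b * cosh b := by
        rw [tanh_eq_sinh_div_cosh]; field_simp
    _ ≤ α * cosh b := mul_le_mul_of_nonneg_right hα (cosh_pos b).le

theorem HasCompactSupport.integrableOn_sq_mul {f g : ℝ → ℝ} (hf : Continuous f)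
    (hsupp : HasCompactSupport f) (hg : Continuous g) (s : Set ℝ) :
    IntegrableOn (fun t => f t ^ 2 * g t) s :=
  (((hf.pow 2).mul hg).integrable_of_hasCompactSupport
    (hsupp.comp_left (g := fun x : ℝ => x ^ 2) (zero_pow two_ne_zero)).mul_right).integrableOn

theorem HasCompactSupport.integrableOn_mul_mul {f f' g : ℝ → ℝ} (hf : Continuous f)
    (hsupp : HasCompactSupport f) (hf' : Continuous f') (hg : Continuous g) (s : Set ℝ) :
    IntegrableOn (fun t => f t * f' t * g t) s :=
  (((hf.mul hf').mul hg).integrable_of_hasCompactSupport hsupp.mul_right.mul_right).integrableOn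

theorem HasCompactSupport.two_mul_integral_Ioi_mul_deriv_mul_sinh {ψ : ℝ → ℝ}
    (hψ : ContDiff ℝ 1 ψ) (hsupp : HasCompactSupport ψ) (b : ℝ) :
    2 * ∫ t in Ioi b, ψ t * deriv ψ t * sinh t =
      -(ψ b ^ 2 * sinh b) - ∫ t in Ioi b, ψ t ^ 2 * cosh t := by
  have hderiv : ∀ t, deriv (fun t => ψ t ^ 2 * sinh t) t =
      2 * (ψ t * deriv ψ t * sinh t) + ψ t ^ 2 * cosh t := fun t => by
    have hψt := (hψ.differentiable one_ne_zero t).hasDerivAt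
    rw [((hψt.fun_pow 2).fun_mul (hasDerivAt_sinh t)).deriv]
    push_cast
    ring
  have hftc : ∫ t in Ioi b, deriv (fun t => ψ t ^ 2 * sinh t) t = -(ψ b ^ 2 * sinh b) :=
    (hsupp.comp_left (g := fun x : ℝ => x ^ 2) (zero_pow two_ne_zero)).mul_right
      |>.integral_Ioi_deriv_eq ((hψ.pow 2).mul contDiff_sinh) b
  have hψ' : Continuous (deriv ψ) := hψ.continuous_deriv le_rfl
  simp only [hderiv] at hftc
  rw [integral_add ((hsupp.integrableOn_mul_mul hψ.continuous hψ' continuous_sinh _).const_mul 2)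
    (hsupp.integrableOn_sq_mul hψ.continuous continuous_cosh _), integral_const_mul] at hftc
  linarith

theorem stmt2_general (b : ℝ) (α : ℝ) (hα : -(1/2 : ℝ) * Real.tanh b ≤ α)
    (ψ : ℝ → ℝ) (hψ : ContDiff ℝ 1 ψ) (hsupp : HasCompactSupport ψ) :
    (1 / 4) * (∫ t in Ioi b, (ψ t) ^ 2 * Real.cosh t) ≤
      (∫ t in Ioi b, (deriv ψ t) ^ 2 * Real.cosh t) + α * Real.cosh b * (ψ b) ^ 2 := by
  have hψ' : Continuous (deriv ψ) := hψ.continuous_deriv le_rfl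
  have hI₁ := hsupp.deriv.integrableOn_sq_mul hψ' continuous_cosh (Ioi b)
  have hI₂ := hsupp.integrableOn_mul_mul hψ.continuous hψ' continuous_sinh (Ioi b)
  have hI₃ := hsupp.integrableOn_sq_mul hψ.continuous continuous_cosh (Ioi b)
  have hsquare : 0 ≤ ∫ t in Ioi b,
      (deriv ψ t ^ 2 * cosh t + ψ t * deriv ψ t * sinh t + ψ t ^ 2 * cosh t / 4) :=
    setIntegral_nonneg measurableSet_Ioi fun t _ => cosh_sinh_quadratic_nonneg (ψ t) (deriv ψ t) t
  rw [integral_add (hI₁.fun_add hI₂) (hI₃.div_const 4), integral_add hI₁ hI₂, integral_div]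
    at hsquare
  have hparts := hsupp.two_mul_integral_Ioi_mul_deriv_mul_sinh hψ b
  have hboundary := mul_le_mul_of_nonneg_right (neg_half_sinh_le_mul_cosh hα) (sq_nonneg (ψ b))
  linarith

/-- Weighted Poincaré-type inequality with boundary term, weight `cosh t`. -/
theorem stmt2 (b : ℝ) (hb : 0 ≤ b) (α : ℝ) (hα : -(1/2 : ℝ) * Real.tanh b ≤ α)
    (ψ : ℝ → ℝ) (hψ : ContDiff ℝ 1 ψ) (hsupp : HasCompactSupport ψ) :
    (1 / 4) * (∫ t in Ioi b, (ψ t) ^ 2 * Real.cosh t) ≤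
      (∫ t in Ioi b, (deriv ψ t) ^ 2 * Real.cosh t) + α * Real.cosh b * (ψ b) ^ 2 :=
  stmt2_general b α hα ψ hψ hsupp
end

section
/- For every b > 0 and every continuously differentiable compactly supported function f on [b,∞), the substitution g(t) = √t f(t) yields the identity ∫_b^∞ |f'(t)|² t dt = ∫_b^∞ |g'(t)|² dt + (1/(2b))|g(b)|² - (1/4)∫_b^∞ |g(t)|²/t² dt; in particular ∫_b^∞ |g'(t)|² dt + (1/(2b))|g(b)|² - (1/4)∫_b^∞ |g(t)|²/t² dt ≥ 0. -/
open Real MeasureTheory Set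

open scoped RealInnerProductSpace

/-! With `g = √t • f` one has `g' = √t • f' + (2√t)⁻¹ • f`, so pointwise
`‖g'‖² - ‖g‖² / (4t²) = t‖f'‖² + ⟪f, f'⟫`. The cross term is half the derivative of `‖f‖²`, so by
compact support it integrates over `(b, ∞)` to `-‖f b‖² / 2 = -‖g b‖² / (2b)`; rearranging gives
the identity, and its left side is the integral of a nonnegative function. -/

theorem HasCompactSupport.integrableOn_Ioi {F : Type*} [NormedAddCommGroup F] {h : ℝ → F}
    (hh : HasCompactSupport h) {b : ℝ} (hc : ContinuousOn h (Ici b)) :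
    IntegrableOn h (Ioi b) := by
  have hK : IsCompact (Ici b ∩ tsupport h) := hh.isCompact.inter_left isClosed_Ici
  refine ((hc.mono inter_subset_left).integrableOn_compact hK).of_forall_sdiff_eq_zero
    measurableSet_Ioi fun t ht => image_eq_zero_of_notMem_tsupport fun hts => ?_
  exact ht.2 ⟨mem_Ici_of_Ioi ht.1, hts⟩

variable {E : Type*} [NormedAddCommGroup E] [InnerProductSpace ℝ E]

theorem integral_Ioi_inner_deriv_eq {f : ℝ → E} (hf : ContDiff ℝ 1 f)
    (hsupp : HasCompactSupport f) (b : ℝ) :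
    ∫ t in Ioi b, ⟪f t, deriv f t⟫ = -(‖f b‖ ^ 2 / 2) := by
  have hderiv : deriv (‖f ·‖ ^ 2) = fun t => 2 * ⟪f t, deriv f t⟫ := funext fun t =>
    ((hf.differentiable one_ne_zero t).hasDerivAt.norm_sq).deriv
  have hFTC := HasCompactSupport.integral_Ioi_deriv_eq (hf.norm_sq ℝ)
    (hsupp.comp_left (g := (‖·‖ ^ 2)) (by simp)) b
  rw [hderiv, integral_const_mul] at hFTC
  linarith

theorem norm_sqrt_smul_sq {t : ℝ} (ht : 0 ≤ t) (u : E) : ‖√t • u‖ ^ 2 = t * ‖u‖ ^ 2 := by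
  rw [norm_smul, mul_pow, norm_of_nonneg (sqrt_nonneg t), sq_sqrt ht]

theorem norm_sq_sqrt_smul_add_sub {t : ℝ} (ht : 0 < t) (u v : E) :
    ‖√t • v + (1 / (2 * √t)) • u‖ ^ 2 - 1 / 4 * (‖√t • u‖ ^ 2 / t ^ 2)
      = ‖v‖ ^ 2 * t + ⟪u, v⟫ := by
  have hs : 0 < √t := sqrt_pos.mpr ht
  rw [norm_add_sq_real, norm_smul, norm_smul, real_inner_smul_left, real_inner_smul_right,
    norm_sqrt_smul_sq ht.le, real_inner_comm, norm_of_nonneg hs.le,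
    norm_of_nonneg (by positivity)]
  have h2 : √t ^ 2 = t := sq_sqrt ht.le
  field_simp
  rw [h2]
  ring

theorem hasDerivAt_sqrt_smul {f : ℝ → E} {f' : E} {t : ℝ} (ht : 0 < t) (hf : HasDerivAt f f' t) :
    HasDerivAt (fun s => √s • f s) (√t • f' + (1 / (2 * √t)) • f t) t :=
  (hasDerivAt_sqrt ht.ne').smul hf

theorem integral_Ioi_norm_sq_deriv_mul_self {f : ℝ → E} (hf : ContDiff ℝ 1 f)
    (hsupp : HasCompactSupport f) {b : ℝ} (hb : 0 < b) :
    ∫ t in Ioi b, ‖deriv f t‖ ^ 2 * t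
      = (∫ t in Ioi b, ‖deriv (fun s => √s • f s) t‖ ^ 2) + 1 / (2 * b) * ‖√b • f b‖ ^ 2
        - 1 / 4 * ∫ t in Ioi b, ‖√t • f t‖ ^ 2 / t ^ 2 := by
  set g : ℝ → E := fun s => √s • f s
  have hfd : Differentiable ℝ f := hf.differentiable one_ne_zero
  have hf'c : Continuous (deriv f) := hf.continuous_deriv le_rfl
  have hpos : ∀ t ∈ Ici b, 0 < t := fun t ht => hb.trans_le ht
  have hderiv_g : EqOn (deriv g) (fun t => √t • deriv f t + (1 / (2 * √t)) • f t) (Ici b) :=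
    fun t ht => (hasDerivAt_sqrt_smul (hpos t ht) (hfd t).hasDerivAt).deriv
  have hg_cont : Continuous g := continuous_sqrt.smul hfd.continuous
  have hg_supp : HasCompactSupport g := hsupp.smul_left
  have hint_deriv_g : IntegrableOn (fun t => ‖deriv g t‖ ^ 2) (Ioi b) := by
    refine (hg_supp.deriv.comp_left (g := (‖·‖ ^ 2)) (by simp)).integrableOn_Ioi ?_
    refine ((ContinuousOn.congr ?_ hderiv_g).norm).pow 2
    refine (continuous_sqrt.smul hf'c).continuousOn.add
      (ContinuousOn.smul ?_ hfd.continuous.continuousOn)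
    exact continuousOn_const.div (by fun_prop) fun t ht => by have := hpos t ht; positivity
  have hint_g : IntegrableOn (fun t => ‖g t‖ ^ 2 / t ^ 2) (Ioi b) := by
    refine HasCompactSupport.integrableOn_Ioi (hsupp.mono fun t ht hft => ht (by simp [g, hft])) ?_
    exact (hg_cont.norm.pow 2).continuousOn.div (by fun_prop) fun t ht => by
      have := hpos t ht; positivity
  have hint_inner : IntegrableOn (fun t => ⟪f t, deriv f t⟫) (Ioi b) :=
    ((hfd.continuous.inner hf'c).integrable_of_hasCompactSupport
      (hsupp.mono fun t ht hft => ht (by simp [hft]))).integrableOn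
  calc ∫ t in Ioi b, ‖deriv f t‖ ^ 2 * t
      = ∫ t in Ioi b, (‖deriv g t‖ ^ 2 - 1 / 4 * (‖g t‖ ^ 2 / t ^ 2) - ⟪f t, deriv f t⟫) := by
        refine setIntegral_congr_fun measurableSet_Ioi fun t ht => ?_
        rw [hderiv_g (mem_Ici_of_Ioi ht), norm_sq_sqrt_smul_add_sub (hpos t (mem_Ici_of_Ioi ht))]
        ring
    _ = (∫ t in Ioi b, ‖deriv g t‖ ^ 2) - 1 / 4 * (∫ t in Ioi b, ‖g t‖ ^ 2 / t ^ 2)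
          + ‖f b‖ ^ 2 / 2 := by
        rw [integral_sub (by exact hint_deriv_g.sub (hint_g.const_mul _)) hint_inner,
          integral_sub hint_deriv_g (hint_g.const_mul _), integral_const_mul,
          integral_Ioi_inner_deriv_eq hf hsupp]
        ring
    _ = _ := by
        rw [norm_sqrt_smul_sq hb.le]
        field_simp
        ring

/-- The substitution `g(t) = √t f(t)` identity and the resulting nonnegativity. -/
theorem stmt3 (b : ℝ) (hb : 0 < b) (f : ℝ → ℂ) (hf : ContDiff ℝ 1 f)
    (hsupp : HasCompactSupport f) (g : ℝ → ℂ)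
    (hg : g = fun t => (Real.sqrt t : ℂ) * f t) :
    (∫ t in Ioi b, ‖deriv f t‖ ^ 2 * t)
        = (∫ t in Ioi b, ‖deriv g t‖ ^ 2) + (1 / (2 * b)) * ‖g b‖ ^ 2
          - (1 / 4) * (∫ t in Ioi b, ‖g t‖ ^ 2 / t ^ 2) ∧
    0 ≤ (∫ t in Ioi b, ‖deriv g t‖ ^ 2) + (1 / (2 * b)) * ‖g b‖ ^ 2
          - (1 / 4) * (∫ t in Ioi b, ‖g t‖ ^ 2 / t ^ 2) := by
  have hg_smul : g = fun t => √t • f t := by simp only [hg, Complex.real_smul]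
  subst hg_smul
  have key := integral_Ioi_norm_sq_deriv_mul_self hf hsupp hb
  refine ⟨key, key ▸ setIntegral_nonneg measurableSet_Ioi fun t ht => ?_⟩
  have : 0 < t := hb.trans ht
  positivity
end

section
/- For ν > −1/2 and x > 1, the Legendre function of the second kind Q_ν(x) = ∫_0^∞ (x + √(x²−1) cosh t)^{−(ν+1)} dt satisfies the ratio bound Q_{ν+1}(x)/Q_ν(x) ≤ 1/(x + √(x²−1)). -/
/-!
Since `cosh t ≥ 1`, the base `x + √(x²-1) cosh t` of the integrand of `Q_ν(x)` is at least
`x + √(x²-1)`. Raising the degree by one divides the integrand by this base, hence multiplies it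
by at most `1 / (x + √(x²-1))`; integrating gives `Q_{ν+1}(x) (x + √(x²-1)) ≤ Q_ν(x)`, and
`Q_ν(x) > 0`.
-/

open Real MeasureTheory Set

/-- The Legendre function of the second kind (order 0, degree ν), for `x > 1`. -/
noncomputable def legendreQ (ν x : ℝ) : ℝ :=
  ∫ t in Ioi (0 : ℝ), (x + Real.sqrt (x ^ 2 - 1) * Real.cosh t) ^ (-(ν + 1))

lemma half_mul_exp_le_add_mul_cosh {a b : ℝ} (ha : 0 ≤ a) (hb : 0 ≤ b) (t : ℝ) :
    b / 2 * exp t ≤ a + b * cosh t := by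
  rw [cosh_eq]
  nlinarith [exp_pos (-t)]

lemma add_mul_cosh_pos {a b : ℝ} (ha : 0 ≤ a) (hb : 0 < b) (t : ℝ) : 0 < a + b * cosh t :=
  add_pos_of_nonneg_of_pos ha (mul_pos hb (cosh_pos t))

lemma integrableOn_add_mul_cosh_rpow_neg {a b μ : ℝ} (ha : 0 ≤ a) (hb : 0 < b) (hμ : 0 < μ) :
    IntegrableOn (fun t => (a + b * cosh t) ^ (-μ)) (Ioi 0) := by
  have hpos := add_mul_cosh_pos ha hb
  refine Integrable.mono' ((exp_neg_integrableOn_Ioi 0 hμ).const_mul ((b / 2) ^ (-μ))) ?_ ?_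
  · exact ((continuous_const.add (continuous_const.mul continuous_cosh)).rpow_const
      fun t => Or.inl (hpos t).ne').aestronglyMeasurable
  · filter_upwards with t
    rw [norm_of_nonneg (rpow_nonneg (hpos t).le _)]
    calc (a + b * cosh t) ^ (-μ) ≤ (b / 2 * exp t) ^ (-μ) :=
          rpow_le_rpow_of_nonpos (by positivity) (half_mul_exp_le_add_mul_cosh ha hb.le t)
            (by linarith)
      _ = (b / 2) ^ (-μ) * exp (-μ * t) := by
          rw [mul_rpow (by positivity) (exp_pos t).le, ← exp_mul, mul_comm t]

lemma rpow_sub_one_mul_le {b c : ℝ} (μ : ℝ) (hb : 0 < b) (hc : c ≤ b) :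
    b ^ (μ - 1) * c ≤ b ^ μ := by
  rw [rpow_sub_one hb.ne', div_mul_eq_mul_div, div_le_iff₀ hb]
  exact mul_le_mul_of_nonneg_left hc (rpow_nonneg hb.le μ)

lemma sqrt_sq_sub_one_pos {x : ℝ} (hx : 1 < x) : 0 < √(x ^ 2 - 1) :=
  sqrt_pos.2 (by nlinarith)

lemma integrableOn_legendreQ_integrand {ν x : ℝ} (hν : -1 < ν) (hx : 1 < x) :
    IntegrableOn (fun t => (x + √(x ^ 2 - 1) * cosh t) ^ (-(ν + 1))) (Ioi 0) :=
  integrableOn_add_mul_cosh_rpow_neg (by linarith) (sqrt_sq_sub_one_pos hx) (by linarith)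

lemma legendreQ_pos {ν x : ℝ} (hν : -1 < ν) (hx : 1 < x) : 0 < legendreQ ν x := by
  have hpos t : 0 < (x + √(x ^ 2 - 1) * cosh t) ^ (-(ν + 1)) :=
    rpow_pos_of_pos (add_mul_cosh_pos (by linarith) (sqrt_sq_sub_one_pos hx) t) _
  rw [legendreQ, integral_pos_iff_support_of_nonneg (fun t => (hpos t).le)
    (integrableOn_legendreQ_integrand hν hx), Function.support_eq_univ fun t => (hpos t).ne']
  simp

lemma legendreQ_add_one_mul_le {ν x : ℝ} (hν : -1 < ν) (hx : 1 < x) :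
    legendreQ (ν + 1) x * (x + √(x ^ 2 - 1)) ≤ legendreQ ν x := by
  rw [legendreQ, legendreQ, ← integral_mul_const]
  refine setIntegral_mono_on ((integrableOn_legendreQ_integrand (by linarith) hx).mul_const _)
    (integrableOn_legendreQ_integrand hν hx) measurableSet_Ioi fun t _ => ?_
  rw [neg_add' (ν + 1)]
  exact rpow_sub_one_mul_le _ (add_mul_cosh_pos (by linarith) (sqrt_sq_sub_one_pos hx) t)
    (by nlinarith [one_le_cosh t, sqrt_sq_sub_one_pos hx])

/-- Ratio bound for Legendre functions of the second kind. -/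
theorem stmt12 (ν x : ℝ) (hν : -(1/2 : ℝ) < ν) (hx : 1 < x) :
    legendreQ (ν + 1) x / legendreQ ν x ≤ 1 / (x + Real.sqrt (x ^ 2 - 1)) := by
  rw [div_le_div_iff₀ (legendreQ_pos (by linarith) hx)
    (by linarith [sqrt_sq_sub_one_pos hx]), one_mul]
  exact legendreQ_add_one_mul_le (by linarith) hx
end

section
/- Let φ : [0,∞) → ℝ be a C¹ function with φ, φ' ∈ L²((0,∞); sinh t dt), φ strictly decreasing, strictly convex, and satisfying the boundary condition −φ'(0) + α φ(0) = 0 for some α < 0. Assume ∫_0^∞ |φ'(t)|² cosh t dt + α|φ(0)|² > 0. Then (∫_0^∞ |φ'|² cosh t dt + α|φ(0)|²) / ∫_0^∞ |φ|² cosh t dt < (∫_0^∞ |φ'|² sinh t dt) / ∫_0^∞ |φ|² sinh t dt. -/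
open Real MeasureTheory Set

/-! Split `cosh t = sinh t + exp (-t)`. The denominator on the `cosh` side then exceeds the one
on the `sinh` side by `∫ φ² e^{-t} > 0`, whereas its numerator exceeds `∫ φ'² sinh` by
`∫ φ'² e^{-t} + α φ(0)² ≤ 0`: convexity and monotonicity give `|φ'| ≤ -φ'(0)`, hence
`∫ φ'² e^{-t} ≤ -φ'(0) ∫ (-φ') e^{-t} ≤ -φ'(0) φ(0)`, which is `-α φ(0)²` by the boundary
condition. Positivity of `φ` comes from the integrability of `φ² sinh` for a decreasing `φ`. -/

lemma not_integrableOn_Ioi_of_pos_le {f : ℝ → ℝ} {a c : ℝ} (hc : 0 < c)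
    (hf : ∀ t > a, c ≤ f t) : ¬ IntegrableOn f (Ioi a) := by
  intro hint
  have hconst : IntegrableOn (fun _ => c) (Ioi a) :=
    hint.mono' aestronglyMeasurable_const <|
      (ae_restrict_iff' measurableSet_Ioi).mpr <| ae_of_all _ fun t ht => by
        rw [norm_of_nonneg hc.le]; exact hf t ht
  simp [hc.ne'] at hconst

lemma StrictAntiOn.pos_of_integrableOn_sq_mul {f w : ℝ → ℝ} {a : ℝ}
    (hf : StrictAntiOn f (Ici a)) (hw : MonotoneOn w (Ioi a)) (hw_pos : ∀ t > a, 0 < w t)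
    (hint : IntegrableOn (fun t => f t ^ 2 * w t) (Ioi a)) {t : ℝ} (ht : a ≤ t) : 0 < f t := by
  by_contra! hneg
  have hft : f (t + 1) < 0 := (hf ht (by simp; linarith) (by linarith)).trans_le hneg
  refine not_integrableOn_Ioi_of_pos_le (c := f (t + 1) ^ 2 * w (t + 1))
    (mul_pos (by nlinarith) (hw_pos _ (by linarith))) (fun s hs => ?_)
    (hint.mono_set (Ioi_subset_Ioi (by linarith : a ≤ t + 1)))
  have hfs : f s < f (t + 1) := hf (by simp; linarith) (by simp; linarith) hs
  have hsq : f (t + 1) ^ 2 ≤ f s ^ 2 := by nlinarith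
  have hws : w (t + 1) ≤ w s := hw (by simp; linarith) (by simp; linarith) hs.le
  exact mul_le_mul hsq hws (hw_pos _ (by linarith)).le (sq_nonneg _)

lemma deriv_mem_Icc_of_convexOn {f : ℝ → ℝ} {a t : ℝ} (hd : Differentiable ℝ f)
    (hconv : ConvexOn ℝ (Ici a) f) (hanti : AntitoneOn f (Ici a)) (ht : a ≤ t) :
    deriv f t ∈ Icc (deriv f a) 0 := by
  refine ⟨hconv.monotoneOn_deriv (fun x _ => hd x) self_mem_Ici ht ht, ?_⟩
  calc deriv f t ≤ slope f t (t + 1) :=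
        hconv.deriv_le_slope ht (by simp; linarith) (by linarith) (hd t)
    _ ≤ 0 := by
        rw [slope_def_field, add_sub_cancel_left, div_one, sub_nonpos]
        exact hanti ht (by simp; linarith) (by linarith)

lemma integrableOn_Ioi_mul_exp_neg {g : ℝ → ℝ} {a C : ℝ} (hg : Continuous g)
    (hbound : ∀ t > a, |g t| ≤ C) : IntegrableOn (fun t => g t * exp (-t)) (Ioi a) :=
  (integrableOn_exp_neg_Ioi a).bdd_mul hg.aestronglyMeasurable <|
    (ae_restrict_iff' measurableSet_Ioi).mpr <| ae_of_all _ hbound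

lemma integrableOn_Ioi_sq_mul_exp_neg {g : ℝ → ℝ} {a C : ℝ} (hg : Continuous g)
    (hbound : ∀ t > a, |g t| ≤ C) : IntegrableOn (fun t => g t ^ 2 * exp (-t)) (Ioi a) :=
  integrableOn_Ioi_mul_exp_neg (hg.pow 2) fun t ht => by
    rw [abs_sq, ← sq_abs]
    exact pow_le_pow_left₀ (abs_nonneg _) (hbound t ht) 2

lemma setIntegral_mul_cosh {g : ℝ → ℝ} {s : Set ℝ}
    (hsinh : IntegrableOn (fun t => g t * sinh t) s)
    (hexp : IntegrableOn (fun t => g t * exp (-t)) s) :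
    ∫ t in s, g t * cosh t = (∫ t in s, g t * sinh t) + ∫ t in s, g t * exp (-t) := by
  rw [← integral_add hsinh hexp]
  congr 1 with t
  rw [← cosh_sub_sinh]
  ring

lemma setIntegral_Ioi_pos {g : ℝ → ℝ} {a : ℝ} (hg : ∀ t > a, 0 < g t)
    (hint : IntegrableOn g (Ioi a)) : 0 < ∫ t in Ioi a, g t := by
  rw [setIntegral_pos_iff_support_of_nonneg_ae
    ((ae_restrict_iff' measurableSet_Ioi).mpr <| ae_of_all _ fun t ht => (hg t ht).le) hint,
    inter_eq_self_of_subset_right (show Ioi a ⊆ Function.support g from fun t ht =>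
      (hg t ht).ne'), volume_Ioi]
  exact ENNReal.zero_lt_top

lemma setIntegral_Ioi_neg_deriv_mul_le {f w : ℝ → ℝ} {a : ℝ} (hf : ContDiff ℝ 1 f)
    (hf' : ∀ t ≥ a, deriv f t ≤ 0) (hf_nonneg : ∀ t ≥ a, 0 ≤ f t)
    (hw : ∀ t ≥ a, w t ≤ 1)
    (hint : IntegrableOn (fun t => -deriv f t * w t) (Ioi a)) :
    ∫ t in Ioi a, -deriv f t * w t ≤ f a := by
  have hcont : Continuous (deriv f) := hf.continuous_deriv le_rfl
  refine le_of_tendsto (intervalIntegral_tendsto_integral_Ioi a hint Filter.tendsto_id) ?_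
  filter_upwards [Filter.eventually_ge_atTop a] with T hT
  have hftc : ∫ t in a..T, -deriv f t = f a - f T := by
    rw [intervalIntegral.integral_neg, intervalIntegral.integral_deriv_eq_sub
      (fun x _ => (hf.differentiable one_ne_zero) x) (hcont.intervalIntegrable a T)]
    ring
  calc ∫ t in a..T, -deriv f t * w t
      ≤ ∫ t in a..T, -deriv f t :=
        intervalIntegral.integral_mono_on hT
          ((intervalIntegrable_iff_integrableOn_Ioc_of_le hT).mpr
            (hint.mono_set Ioc_subset_Ioi_self))
          (hcont.neg.intervalIntegrable a T) fun t ht => by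
            nlinarith [hf' t ht.1, hw t ht.1]
    _ = f a - f T := hftc
    _ ≤ f a := by linarith [hf_nonneg T hT]

lemma setIntegral_Ioi_deriv_sq_mul_exp_neg_le {f : ℝ → ℝ} {a : ℝ} (ha : 0 ≤ a)
    (hf : ContDiff ℝ 1 f) (hf_nonneg : ∀ t ≥ a, 0 ≤ f t)
    (hderiv : ∀ t ≥ a, deriv f t ∈ Icc (deriv f a) 0) :
    ∫ t in Ioi a, deriv f t ^ 2 * exp (-t) ≤ -deriv f a * f a := by
  have hint : IntegrableOn (fun t => -deriv f t * exp (-t)) (Ioi a) :=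
    integrableOn_Ioi_mul_exp_neg (C := -deriv f a) (hf.continuous_deriv le_rfl).neg fun t ht => by
      rw [abs_neg, abs_of_nonpos (hderiv t ht.le).2]
      linarith [(hderiv t ht.le).1]
  calc ∫ t in Ioi a, deriv f t ^ 2 * exp (-t)
      ≤ ∫ t in Ioi a, -deriv f a * (-deriv f t * exp (-t)) := by
        refine integral_mono_of_nonneg (ae_of_all _ fun t => by positivity) (hint.const_mul _) <|
          (ae_restrict_iff' measurableSet_Ioi).mpr <| ae_of_all _ fun t ht => ?_
        obtain ⟨h₁, h₂⟩ := hderiv t ht.le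
        have := mul_nonneg (mul_nonneg (sub_nonneg.mpr h₁) (neg_nonneg.mpr h₂))
          (exp_pos (-t)).le
        dsimp only
        nlinarith
    _ = -deriv f a * ∫ t in Ioi a, -deriv f t * exp (-t) := integral_const_mul _ _
    _ ≤ -deriv f a * f a :=
        mul_le_mul_of_nonneg_left
          (setIntegral_Ioi_neg_deriv_mul_le hf (fun t ht => (hderiv t ht).2) hf_nonneg
            (fun t ht => exp_le_one_iff.mpr (by linarith)) hint)
          (by linarith [(hderiv a le_rfl).2])

theorem stmt15_general (φ : ℝ → ℝ) (hφ : ContDiff ℝ 1 φ)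
    (hL2 : IntegrableOn (fun t => (φ t) ^ 2 * Real.sinh t) (Ioi 0))
    (hL2' : IntegrableOn (fun t => (deriv φ t) ^ 2 * Real.sinh t) (Ioi 0))
    (hanti : StrictAntiOn φ (Ici 0))
    (hconv : StrictConvexOn ℝ (Ici 0) φ)
    (α : ℝ)
    (hbc : -deriv φ 0 + α * φ 0 = 0)
    (hpos : 0 < (∫ t in Ioi (0:ℝ), (deriv φ t) ^ 2 * Real.cosh t) + α * (φ 0) ^ 2) :
    ((∫ t in Ioi (0:ℝ), (deriv φ t) ^ 2 * Real.cosh t) + α * (φ 0) ^ 2)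
        / (∫ t in Ioi (0:ℝ), (φ t) ^ 2 * Real.cosh t)
      < (∫ t in Ioi (0:ℝ), (deriv φ t) ^ 2 * Real.sinh t)
        / (∫ t in Ioi (0:ℝ), (φ t) ^ 2 * Real.sinh t) := by
  have hφ_pos : ∀ t ≥ 0, 0 < φ t := fun t ht =>
    hanti.pos_of_integrableOn_sq_mul (sinh_strictMono.monotone.monotoneOn _)
      (fun s hs => sinh_pos_iff.mpr hs) hL2 ht
  have hderiv : ∀ t ≥ 0, deriv φ t ∈ Icc (deriv φ 0) 0 := fun t ht =>
    deriv_mem_Icc_of_convexOn (hφ.differentiable one_ne_zero) hconv.convexOn hanti.antitoneOn ht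
  have hE : IntegrableOn (fun t => φ t ^ 2 * exp (-t)) (Ioi 0) :=
    integrableOn_Ioi_sq_mul_exp_neg (C := φ 0) hφ.continuous fun t ht => by
      rw [abs_of_pos (hφ_pos t ht.le)]
      exact hanti.antitoneOn self_mem_Ici ht.le ht.le
  have hF : IntegrableOn (fun t => deriv φ t ^ 2 * exp (-t)) (Ioi 0) :=
    integrableOn_Ioi_sq_mul_exp_neg (C := -deriv φ 0) (hφ.continuous_deriv le_rfl) fun t ht => by
      rw [abs_of_nonpos (hderiv t ht.le).2]
      linarith [(hderiv t ht.le).1]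
  have henergy : ∫ t in Ioi 0, deriv φ t ^ 2 * exp (-t) ≤ -α * φ 0 ^ 2 := by
    have := setIntegral_Ioi_deriv_sq_mul_exp_neg_le le_rfl hφ (fun t ht => (hφ_pos t ht).le)
      hderiv
    rw [show deriv φ 0 = α * φ 0 by linarith] at this
    linarith
  have hDs : 0 < ∫ t in Ioi 0, φ t ^ 2 * sinh t :=
    setIntegral_Ioi_pos (fun t ht => mul_pos (pow_pos (hφ_pos t ht.le) 2) (sinh_pos_iff.mpr ht))
      hL2
  have hDe : 0 < ∫ t in Ioi 0, φ t ^ 2 * exp (-t) :=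
    setIntegral_Ioi_pos (fun t ht => mul_pos (pow_pos (hφ_pos t ht.le) 2) (exp_pos _)) hE
  rw [setIntegral_mul_cosh hL2' hF] at hpos ⊢
  rw [setIntegral_mul_cosh hL2 hE]
  calc _ < ((∫ t in Ioi 0, deriv φ t ^ 2 * sinh t) + (∫ t in Ioi 0, deriv φ t ^ 2 * exp (-t))
          + α * φ 0 ^ 2) / ∫ t in Ioi 0, φ t ^ 2 * sinh t :=
        div_lt_div_of_pos_left hpos hDs (by linarith)
    _ ≤ _ := by gcongr; linarith

/-- Comparison of Rayleigh-type quotients for a decreasing convex radial ground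
state, used for the monotonicity of the lowest Robin eigenvalue in the radius. -/
theorem stmt15 (φ : ℝ → ℝ) (hφ : ContDiff ℝ 1 φ)
    (hL2 : IntegrableOn (fun t => (φ t) ^ 2 * Real.sinh t) (Ioi 0))
    (hL2' : IntegrableOn (fun t => (deriv φ t) ^ 2 * Real.sinh t) (Ioi 0))
    (hanti : StrictAntiOn φ (Ici 0))
    (hconv : StrictConvexOn ℝ (Ici 0) φ)
    (α : ℝ) (hα : α < 0)
    (hbc : -deriv φ 0 + α * φ 0 = 0)
    (hpos : 0 < (∫ t in Ioi (0:ℝ), (deriv φ t) ^ 2 * Real.cosh t) + α * (φ 0) ^ 2) :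
    ((∫ t in Ioi (0:ℝ), (deriv φ t) ^ 2 * Real.cosh t) + α * (φ 0) ^ 2)
        / (∫ t in Ioi (0:ℝ), (φ t) ^ 2 * Real.cosh t)
      < (∫ t in Ioi (0:ℝ), (deriv φ t) ^ 2 * Real.sinh t)
        / (∫ t in Ioi (0:ℝ), (φ t) ^ 2 * Real.sinh t) :=
  stmt15_general φ hφ hL2 hL2' hanti hconv α hbc hpos
end
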